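/- Let F be a stable necklace and z ∈ F a point that is not a main node of any copy of F (z ∉ M_F). Then for each m ≥ 1 the set U_m = ⋃{A : A an m-level copy of F with z ∉ A} is connected, the sets U_m increase with m, and F \ {z} = ⋃_{m≥1} U_m is connected; hence z is not a cut point of F. -/

import Mathlib

open Set Topology Metric Bornology

noncomputable section

/-- Euclidean space `ℝ^d`. -/
abbrev Euc (d : ℕ) := EuclideanSpace ℝ (Fin d)

/-- A fractal necklace in `ℝ^d`: the attractor `F` of a necklace IFS `f_1, …, f_n`
(`n ≥ 3`) of contractive homeomorphisms of `ℝ^d`, where cyclically adjacent 1-level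
copies meet in a single point (a main node `z k`) and non-adjacent copies are disjoint. -/
structure Necklace (d : ℕ) where
  n : ℕ
  hn : 3 ≤ n
  f : Fin n → (Euc d ≃ₜ Euc d)
  contr : ∀ k, ∃ c : NNReal, c < 1 ∧ LipschitzWith c (f k)
  F : Set (Euc d)
  Fne : F.Nonempty
  Fcpt : IsCompact F
  Fattr : F = ⋃ k, (f k) '' F
  z : Fin n → Euc d
  hz : ∀ k : Fin n, (f k) '' F ∩ (f (k + ⟨1, by omega⟩)) '' F = {z k}
  hdisj : ∀ m k : Fin n, m ≠ k → m ≠ k + ⟨1, by omega⟩ → k ≠ m + ⟨1, by omega⟩ →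
    (f m) '' F ∩ (f k) '' F = ∅

namespace Necklace

variable {d : ℕ}

/-- The digit `1` of `Fin n`. -/
def one (N : Necklace d) : Fin N.n := ⟨1, by have := N.hn; omega⟩

/-- The homeomorphism `f_σ = f_{i₁} ∘ ⋯ ∘ f_{i_m}` associated to a word `σ = i₁⋯i_m`. -/
def word (N : Necklace d) : List (Fin N.n) → (Euc d ≃ₜ Euc d)
  | [] => Homeomorph.refl _
  | i :: s => (N.word s).trans (N.f i)

/-- The copy `F_σ = f_σ(F)` of the necklace. -/
def copy (N : Necklace d) (σ : List (Fin N.n)) : Set (Euc d) := N.word σ '' N.F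

/-- `c_m(x)`: the number of words `σ` of length `m` with `x ∈ F_σ`. -/
def cnt (N : Necklace d) (m : ℕ) (x : Euc d) : ℕ :=
  Set.ncard {σ : List (Fin N.n) | σ.length = m ∧ x ∈ N.copy σ}

/-- The boundary `∂_F F_k = {z_{k-1}, z_k}` of the 1-level copy `F_k` in `F`. -/
def bdry (N : Necklace d) (k : Fin N.n) : Set (Euc d) := {N.z (k - N.one), N.z k}

/-- A necklace is stable if for each `k` at least two second-level copies `F_{kj}`
meet `∂_F F_k`. -/
def Stable (N : Necklace d) : Prop :=
  ∀ k : Fin N.n,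
    2 ≤ Set.ncard {A : Set (Euc d) |
      (∃ j : Fin N.n, A = N.f k '' (N.f j '' N.F)) ∧ (A ∩ N.bdry k).Nonempty}

/-- A necklace is good if `∂_F F_k` is not contained in any second-level copy `F_{kj}`. -/
def Good (N : Necklace d) : Prop :=
  ∀ k j : Fin N.n, ¬ (N.bdry k ⊆ N.f k '' (N.f j '' N.F))

/-- A necklace is of bounded ramification if `{c_m(z_k)}_m` is bounded for each `k`. -/
def BoundedRamification (N : Necklace d) : Prop :=
  ∀ k : Fin N.n, ∃ C : ℕ, ∀ m : ℕ, N.cnt m (N.z k) ≤ C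

/-- `M_F`: the set of points that are main nodes of some copy of `F`. -/
def MF (N : Necklace d) : Set (Euc d) :=
  {x | ∃ (σ : List (Fin N.n)) (k : Fin N.n), x = N.word σ (N.z k)}

/-- A necklace has no cut points if `F \ {x}` is connected for every `x ∈ F`. -/
def NoCutPoints (N : Necklace d) : Prop :=
  ∀ x ∈ N.F, IsConnected (N.F \ {x})

/-- Property I: each 1-level copy `F_k` has an arc from `z_{k-1}` to `z_k` passing
through at least two main nodes of `F_k`. -/
def PropertyI (N : Necklace d) : Prop :=
  ∀ k : Fin N.n, ∃ γ : Path (N.z (k - N.one)) (N.z k),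
    Function.Injective γ ∧ (∀ t, γ t ∈ N.f k '' N.F) ∧
    ∃ p q : Euc d, p ≠ q ∧ (∃ j, p = N.f k (N.z j)) ∧ (∃ j, q = N.f k (N.z j)) ∧
      p ∈ Set.range γ ∧ q ∈ Set.range γ

/-- A necklace is self-similar if the maps of its NIFS are (contractive) similitudes. -/
def SelfSimilar (N : Necklace d) : Prop :=
  ∀ k : Fin N.n, ∃ c : ℝ, 0 < c ∧ c < 1 ∧ ∀ x y, dist (N.f k x) (N.f k y) = c * dist x y

/-- The open set condition for the NIFS of a necklace. -/
def OSC (N : Necklace d) : Prop :=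
  ∃ V : Set (Euc d), V.Nonempty ∧ IsOpen V ∧ IsBounded V ∧
    (∀ k, N.f k '' V ⊆ V) ∧ ∀ j k : Fin N.n, j ≠ k → N.f j '' V ∩ N.f k '' V = ∅

end Necklace

/-- `U_m`: the union of all `m`-level copies of `F` not containing the point `x`. -/
def Necklace.U {d : ℕ} (N : Necklace d) (x : Euc d) (m : ℕ) : Set (Euc d) :=
  ⋃ σ ∈ {σ : List (Fin N.n) | σ.length = m ∧ x ∉ N.copy σ}, N.copy σ

/-! Since `x` is not a main node of any copy, it lies in exactly one copy `F_σ` of each level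
`m`: two distinct copies of the same level meet only in a main node. Hence `U_{m+1}` is `U_m`
together with the children `F_{σj}`, `j ≠ j₀`, of `F_σ` that miss `x`. These children form a
cyclic chain with one link removed, so their union is connected, and stability provides one
of them meeting `∂F_σ`, that is, meeting `U_m`. As copies shrink, every `y ≠ x` lies in some
`U_m`, and an increasing union of connected sets is connected.

Connectedness of `F` itself comes from the same chain structure: under a closed separation of
`F`, every small copy lies on one side, and cyclically chained siblings lie on a common side. -/

open scoped ENNReal NNReal

section Cyclic

open Fin.NatCast in
lemma Fin.eq_of_forall_add_one_eq {n : ℕ} [NeZero n] {α : Type*} {g : Fin n → α}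
    (h : ∀ j, g (j + 1) = g j) (i j : Fin n) : g i = g j := by
  have h0 : ∀ v : ℕ, g v = g 0 := by
    intro v
    induction v with
    | zero => rw [Nat.cast_zero]
    | succ v ih => rw [Nat.cast_succ, h, ih]
  rw [← Fin.cast_val_eq_self i, ← Fin.cast_val_eq_self j, h0, h0]

variable {X : Type*} {n : ℕ} [NeZero n] {S : Fin n → Set X}

lemma iUnion_subset_or_of_cyclic {u v : Set X} (huv : Disjoint u v)
    (hadj : ∀ j, (S j ∩ S (j + 1)).Nonempty) (hS : ∀ j, S j ⊆ u ∨ S j ⊆ v) :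
    ⋃ j, S j ⊆ u ∨ ⋃ j, S j ⊆ v := by
  have hsame : ∀ j, (S (j + 1) ⊆ u) = (S j ⊆ u) := by
    intro j
    obtain ⟨p, hpj, hpj'⟩ := hadj j
    refine propext ⟨fun h => (hS j).resolve_right fun hv => ?_,
      fun h => (hS (j + 1)).resolve_right fun hv => ?_⟩
    · exact huv.ne_of_mem (h hpj') (hv hpj) rfl
    · exact huv.ne_of_mem (h hpj) (hv hpj') rfl
  have hconst := Fin.eq_of_forall_add_one_eq (g := fun j => S j ⊆ u) hsame
  by_cases h0 : S 0 ⊆ u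
  · exact .inl <| iUnion_subset fun j => hconst 0 j ▸ h0
  · exact .inr <| iUnion_subset fun j => (hS j).resolve_left (hconst 0 j ▸ h0)

open Fin.NatCast in
lemma biUnion_ne_eq_biUnion_Icc (k : Fin n) :
    ⋃ j ∈ {j | j ≠ k}, S j = ⋃ v ∈ Icc 1 (n - 1), S (k + v) := by
  ext p
  simp only [mem_iUnion, mem_ofPred_eq, mem_Icc, exists_prop]
  constructor
  · rintro ⟨j, hjk, hp⟩
    have hv : (j - k).val ≠ 0 := fun h => hjk (sub_eq_zero.mp (Fin.ext h))
    refine ⟨(j - k).val, ⟨by omega, by have := (j - k).isLt; omega⟩, ?_⟩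
    rwa [Fin.cast_val_eq_self, add_sub_cancel]
  · rintro ⟨v, ⟨hv1, hvn⟩, hp⟩
    refine ⟨k + v, fun h => ?_, hp⟩
    have : ((v : Fin n) : ℕ) = 0 := by rw [add_eq_left.mp h, Fin.val_zero]
    rw [Fin.val_natCast, Nat.mod_eq_of_lt (by omega)] at this
    omega

open Fin.NatCast in
lemma isConnected_biUnion_ne_of_cyclic [TopologicalSpace X] (hn : 2 ≤ n)
    (hS : ∀ j, IsConnected (S j)) (hadj : ∀ j, (S j ∩ S (j + 1)).Nonempty) (k : Fin n) :
    IsConnected (⋃ j ∈ {j | j ≠ k}, S j) := by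
  rw [biUnion_ne_eq_biUnion_Icc]
  refine IsConnected.biUnion_of_chain ⟨1, by simp; omega⟩ ordConnected_Icc
    (fun v _ => hS _) fun v _ _ => ?_
  rw [Order.succ_eq_add_one, Nat.cast_add_one, ← add_assoc]
  exact hadj _

end Cyclic

namespace Necklace

variable {d : ℕ} (N : Necklace d)

instance : NeZero N.n := ⟨by have := N.hn; omega⟩

lemma one_eq : N.one = 1 := by
  have := N.hn
  ext
  rw [Fin.val_one', Nat.mod_eq_of_lt (by omega)]
  rfl

lemma add_one_ne (k : Fin N.n) : k + 1 ≠ k := by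
  have := N.hn
  rw [Ne, add_eq_left, Fin.ext_iff, Fin.val_one', Fin.val_zero, Nat.mod_eq_of_lt (by omega)]
  exact one_ne_zero

lemma sub_one_ne (k : Fin N.n) : k - 1 ≠ k := fun h =>
  N.add_one_ne (k - 1) (by rw [sub_add_cancel, h])

lemma word_append_apply (s t : List (Fin N.n)) (p : Euc d) :
    N.word (s ++ t) p = N.word s (N.word t p) := by
  induction s with
  | nil => rfl
  | cons a s ih => exact congrArg (N.f a) ih

lemma copy_nil : N.copy [] = N.F := image_id _

lemma copy_append (s t : List (Fin N.n)) : N.copy (s ++ t) = N.word s '' N.copy t := by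
  rw [copy, copy, image_image]
  exact image_congr fun p _ => N.word_append_apply s t p

lemma copy_singleton (k : Fin N.n) : N.copy [k] = N.f k '' N.F := rfl

lemma copy_append_singleton (s : List (Fin N.n)) (j : Fin N.n) :
    N.copy (s ++ [j]) = N.word s '' (N.f j '' N.F) := by
  rw [copy_append, copy_singleton]

lemma copy_cons (a : Fin N.n) (s : List (Fin N.n)) : N.copy (a :: s) = N.f a '' N.copy s :=
  N.copy_append [a] s

lemma copy_eq_iUnion (σ : List (Fin N.n)) : N.copy σ = ⋃ j, N.copy (σ ++ [j]) := by
  simp only [copy_append_singleton, ← image_iUnion, ← N.Fattr]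
  rfl

lemma copy_append_singleton_subset (σ : List (Fin N.n)) (j : Fin N.n) :
    N.copy (σ ++ [j]) ⊆ N.copy σ :=
  N.copy_eq_iUnion σ ▸ subset_iUnion (fun j => N.copy (σ ++ [j])) j

lemma copy_subset_F (σ : List (Fin N.n)) : N.copy σ ⊆ N.F := by
  induction σ using List.reverseRecOn with
  | nil => exact N.copy_nil.le
  | append_singleton σ j ih => exact (N.copy_append_singleton_subset σ j).trans ih

lemma exists_copy_append_singleton_mem {y : Euc d} {σ : List (Fin N.n)}
    (hy : y ∈ N.copy σ) : ∃ j, y ∈ N.copy (σ ++ [j]) :=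
  mem_iUnion.mp (N.copy_eq_iUnion σ ▸ hy)

lemma exists_copy_mem {y : Euc d} (hy : y ∈ N.F) (m : ℕ) :
    ∃ σ : List (Fin N.n), σ.length = m ∧ y ∈ N.copy σ := by
  induction m with
  | zero => exact ⟨[], rfl, N.copy_nil ▸ hy⟩
  | succ m ih =>
    obtain ⟨σ, hσ, hyσ⟩ := ih
    obtain ⟨j, hj⟩ := N.exists_copy_append_singleton_mem hyσ
    exact ⟨σ ++ [j], by simp [hσ], hj⟩

lemma z_mem_image_inter (j : Fin N.n) : N.z j ∈ N.f j '' N.F ∩ N.f (j + 1) '' N.F :=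
  N.one_eq ▸ (N.hz j).ge rfl

lemma word_z_mem_copy (σ : List (Fin N.n)) (j : Fin N.n) :
    N.word σ (N.z j) ∈ N.copy (σ ++ [j]) ∩ N.copy (σ ++ [j + 1]) := by
  rw [copy_append_singleton, copy_append_singleton]
  exact ⟨mem_image_of_mem _ (N.z_mem_image_inter j).1,
    mem_image_of_mem _ (N.z_mem_image_inter j).2⟩

lemma exists_ne_mem_image_of_mem_bdry {k : Fin N.n} {w : Euc d} (hw : w ∈ N.bdry k) :
    ∃ k' ≠ k, w ∈ N.f k' '' N.F := by
  rw [bdry, N.one_eq, mem_insert_iff, mem_singleton_iff] at hw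
  rcases hw with rfl | rfl
  · exact ⟨k - 1, N.sub_one_ne k, (N.z_mem_image_inter _).1⟩
  · exact ⟨k + 1, N.add_one_ne k, (N.z_mem_image_inter k).2⟩

lemma mem_range_z_of_mem_image_inter {a b : Fin N.n} (hab : a ≠ b) {y : Euc d}
    (ha : y ∈ N.f a '' N.F) (hb : y ∈ N.f b '' N.F) : y ∈ range N.z := by
  by_cases hba : b = a + N.one
  · subst hba
    exact ⟨a, ((N.hz a).le ⟨ha, hb⟩).symm⟩
  by_cases hab' : a = b + N.one
  · subst hab'
    exact ⟨b, ((N.hz b).le ⟨hb, ha⟩).symm⟩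
  have hdisj := N.hdisj a b hab hab' (by rintro rfl; exact hba rfl)
  exact (eq_empty_iff_forall_notMem.mp hdisj y ⟨ha, hb⟩).elim

lemma copy_cons_subset (a : Fin N.n) (s : List (Fin N.n)) : N.copy (a :: s) ⊆ N.f a '' N.F :=
  N.copy_cons a s ▸ image_mono (N.copy_subset_F s)

lemma mem_MF_of_mem_copy_of_mem_copy {σ ρ : List (Fin N.n)} (hlen : σ.length = ρ.length)
    (hne : σ ≠ ρ) {y : Euc d} (hσ : y ∈ N.copy σ) (hρ : y ∈ N.copy ρ) : y ∈ N.MF := by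
  induction σ generalizing ρ y with
  | nil => exact absurd (List.length_eq_zero_iff.mp hlen.symm).symm hne
  | cons a σ ih =>
    obtain _ | ⟨b, ρ⟩ := ρ
    · simp at hlen
    by_cases hab : a = b
    · subst hab
      rw [copy_cons] at hσ hρ
      obtain ⟨y, hyσ, rfl⟩ := hσ
      obtain ⟨y', hyρ, hyy'⟩ := hρ
      obtain rfl := (N.f a).injective hyy'
      obtain ⟨τ, k, rfl⟩ := ih (by simpa using hlen) (by simpa using hne) hyσ hyρ
      exact ⟨a :: τ, k, rfl⟩
    · obtain ⟨k, rfl⟩ := N.mem_range_z_of_mem_image_inter hab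
        (N.copy_cons_subset a σ hσ) (N.copy_cons_subset b ρ hρ)
      exact ⟨[], k, rfl⟩

variable {N} in
lemma eq_of_mem_copy {x : Euc d} (hxM : x ∉ N.MF) {σ ρ : List (Fin N.n)}
    (hlen : σ.length = ρ.length) (hσ : x ∈ N.copy σ) (hρ : x ∈ N.copy ρ) : σ = ρ :=
  by_contra fun hne => hxM (N.mem_MF_of_mem_copy_of_mem_copy hlen hne hσ hρ)

lemma exists_lipschitzWith_word : ∃ c : ℝ≥0, c < 1 ∧
    ∀ σ : List (Fin N.n), LipschitzWith (c ^ σ.length) (N.word σ) := by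
  choose c hc1 hc using N.contr
  refine ⟨Finset.univ.sup c, (Finset.sup_lt_iff zero_lt_one).mpr fun k _ => hc1 k, ?_⟩
  intro σ
  induction σ with
  | nil => exact LipschitzWith.id.weaken (by simp)
  | cons a σ ih =>
    rw [List.length_cons, pow_succ']
    exact ((hc a).weaken (Finset.le_sup (Finset.mem_univ a))).comp ih

lemma eventually_ediam_copy_lt {r : ℝ≥0∞} (hr : 0 < r) :
    ∀ᶠ m in Filter.atTop, ∀ σ : List (Fin N.n), σ.length = m → ediam (N.copy σ) < r := by
  obtain ⟨c, hc1, hc⟩ := N.exists_lipschitzWith_word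
  have hlim :
      Filter.Tendsto (fun m : ℕ => (c : ℝ≥0∞) ^ m * ediam N.F) Filter.atTop (𝓝 0) := by
    simpa using ENNReal.Tendsto.mul_const
      (ENNReal.tendsto_pow_atTop_nhds_zero_of_lt_one (by exact_mod_cast hc1))
      (Or.inr N.Fcpt.isBounded.ediam_ne_top)
  filter_upwards [hlim.eventually (gt_mem_nhds hr)] with m hm σ hσ
  calc ediam (N.copy σ) ≤ (c : ℝ≥0∞) ^ m * ediam N.F := by
        simpa [hσ, copy] using (hc σ).ediam_image_le N.F
    _ < r := hm

lemma isPreconnected_F : IsPreconnected N.F := by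
  rw [isPreconnected_iff_subset_of_fully_disjoint_closed N.Fcpt.isClosed]
  intro u v hu hv hFuv huv
  obtain ⟨r, hr, hsep⟩ := exists_pos_forall_lt_edist (N.Fcpt.inter_right hu) hv
    (huv.mono_left inter_subset_right)
  obtain ⟨m, hm⟩ := (N.eventually_ediam_copy_lt (ENNReal.coe_pos.mpr hr)).exists
  have hsmall : ∀ σ : List (Fin N.n), σ.length = m → N.copy σ ⊆ u ∨ N.copy σ ⊆ v := by
    intro σ hσ
    by_contra! h
    obtain ⟨p, hpσ, hpu⟩ := not_subset.mp h.1
    obtain ⟨q, hqσ, hqv⟩ := not_subset.mp h.2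
    have hp : p ∈ v := (hFuv (N.copy_subset_F σ hpσ)).resolve_left hpu
    have hq : q ∈ u := (hFuv (N.copy_subset_F σ hqσ)).resolve_right hqv
    exact (hsep q ⟨N.copy_subset_F σ hqσ, hq⟩ p hp).not_ge
      ((edist_le_ediam_of_mem hqσ hpσ).trans (hm σ hσ).le)
  -- pass from level `m` up to level `0`, merging the cyclically chained children of each copy
  have hlevel : ∀ k σ, σ.length + k = m → N.copy σ ⊆ u ∨ N.copy σ ⊆ v := by
    intro k
    induction k with
    | zero => exact hsmall
    | succ k ih =>
      intro σ hσ
      rw [N.copy_eq_iUnion σ]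
      refine iUnion_subset_or_of_cyclic huv (fun j => ⟨_, N.word_z_mem_copy σ j⟩)
        fun j => ih _ ?_
      simp only [List.length_append, List.length_singleton]
      omega
  simpa [copy_nil] using hlevel m [] (zero_add m)

lemma isConnected_F : IsConnected N.F := ⟨N.Fne, N.isPreconnected_F⟩

lemma isConnected_copy (σ : List (Fin N.n)) : IsConnected (N.copy σ) :=
  N.isConnected_F.image _ (N.word σ).continuous.continuousOn

lemma isConnected_biUnion_ne_copy (σ : List (Fin N.n)) (j₀ : Fin N.n) :
    IsConnected (⋃ j ∈ {j | j ≠ j₀}, N.copy (σ ++ [j])) :=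
  isConnected_biUnion_ne_of_cyclic (by have := N.hn; omega) (fun j => N.isConnected_copy _)
    (fun j => ⟨_, N.word_z_mem_copy σ j⟩) j₀

variable {N}

lemma mem_U {x y : Euc d} {m : ℕ} : y ∈ N.U x m ↔
    ∃ σ : List (Fin N.n), σ.length = m ∧ x ∉ N.copy σ ∧ y ∈ N.copy σ := by
  simp [U, and_assoc]

lemma U_subset_diff (x : Euc d) (m : ℕ) : N.U x m ⊆ N.F \ {x} := by
  intro y hy
  obtain ⟨σ, -, hxσ, hyσ⟩ := mem_U.mp hy
  exact ⟨N.copy_subset_F σ hyσ, fun h => hxσ ((mem_singleton_iff.mp h) ▸ hyσ)⟩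

lemma U_mono (x : Euc d) : Monotone (N.U x) := by
  refine monotone_nat_of_le_succ fun m y hy => ?_
  obtain ⟨σ, hσ, hxσ, hyσ⟩ := mem_U.mp hy
  obtain ⟨j, hj⟩ := N.exists_copy_append_singleton_mem hyσ
  exact mem_U.mpr
    ⟨σ ++ [j], by simp [hσ], fun h => hxσ (N.copy_append_singleton_subset σ j h), hj⟩

lemma U_zero {x : Euc d} (hxF : x ∈ N.F) : N.U x 0 = ∅ :=
  eq_empty_iff_forall_notMem.mpr fun _ hy => by
    obtain ⟨σ, hσ, hxσ, -⟩ := mem_U.mp hy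
    exact hxσ (List.length_eq_zero_iff.mp hσ ▸ N.copy_nil ▸ hxF)

lemma U_succ_eq {x : Euc d} (hxM : x ∉ N.MF) {m : ℕ} {σ : List (Fin N.n)} {j₀ : Fin N.n}
    (hσ : σ.length = m) (hx : x ∈ N.copy (σ ++ [j₀])) :
    N.U x (m + 1) = N.U x m ∪ ⋃ j ∈ {j | j ≠ j₀}, N.copy (σ ++ [j]) := by
  refine subset_antisymm (fun y hy => ?_) (union_subset (N.U_mono x m.le_succ) ?_)
  · obtain ⟨ρ, hρ, hxρ, hyρ⟩ := mem_U.mp hy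
    obtain ⟨ρ, j, rfl⟩ := (List.eq_nil_or_concat' ρ).resolve_left (by rintro rfl; simp at hρ)
    by_cases hxρ' : x ∈ N.copy ρ
    · obtain rfl := eq_of_mem_copy hxM (by simpa [hσ] using hρ) hxρ'
        (N.copy_append_singleton_subset σ j₀ hx)
      exact .inr (mem_biUnion (fun h : j = j₀ => hxρ (h ▸ hx)) hyρ)
    · exact .inl
        (mem_U.mpr ⟨ρ, by simpa using hρ, hxρ', N.copy_append_singleton_subset ρ j hyρ⟩)
  · refine iUnion₂_subset fun j hj y hy =>
      mem_U.mpr ⟨σ ++ [j], by simp [hσ], fun h => hj ?_, hy⟩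
    simpa using eq_of_mem_copy hxM (by simp) h hx

lemma U_inter_biUnion_ne_copy_nonempty {x : Euc d} (hs : N.Stable) (hxM : x ∉ N.MF)
    {τ : List (Fin N.n)} {k j₀ : Fin N.n} (hx : x ∈ N.copy (τ ++ [k] ++ [j₀])) :
    (N.U x (τ.length + 1) ∩ ⋃ j ∈ {j | j ≠ j₀}, N.copy (τ ++ [k] ++ [j])).Nonempty := by
  obtain ⟨_, ⟨⟨j, rfl⟩, w, hwA, hwb⟩, hne⟩ :=
    exists_ne_of_one_lt_ncard (one_lt_two.trans_le (hs k)) (N.f k '' (N.f j₀ '' N.F))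
  obtain ⟨k', hk', hwk'⟩ := N.exists_ne_mem_image_of_mem_bdry hwb
  obtain ⟨w', hw', rfl⟩ := hwA
  refine ⟨N.word τ (N.f k w'), mem_U.mpr ⟨τ ++ [k'], by simp, fun h => hk' ?_, ?_⟩,
    mem_biUnion (fun h : j = j₀ => hne (h ▸ rfl)) ?_⟩
  · simpa using eq_of_mem_copy hxM (by simp) h (N.copy_append_singleton_subset _ _ hx)
  · exact N.copy_append_singleton τ k' ▸ mem_image_of_mem _ hwk'
  · exact N.copy_append_singleton _ j ▸ ⟨w', hw', N.word_append_apply τ [k] w'⟩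

lemma isConnected_U_succ (hs : N.Stable) {x : Euc d} (hxF : x ∈ N.F) (hxM : x ∉ N.MF)
    (m : ℕ) :
    IsConnected (N.U x (m + 1)) := by
  induction m with
  | zero =>
    obtain ⟨j₀, hx⟩ := N.exists_copy_append_singleton_mem (N.copy_nil ▸ hxF)
    rw [U_succ_eq hxM (m := 0) rfl hx, U_zero hxF, empty_union]
    exact N.isConnected_biUnion_ne_copy [] j₀
  | succ m ih =>
    obtain ⟨τ, hτ, hxτ⟩ := N.exists_copy_mem hxF m
    obtain ⟨k, hxk⟩ := N.exists_copy_append_singleton_mem hxτ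
    obtain ⟨j₀, hx⟩ := N.exists_copy_append_singleton_mem hxk
    rw [U_succ_eq hxM (by simp [hτ]) hx]
    exact ih.union (by simpa [hτ] using U_inter_biUnion_ne_copy_nonempty hs hxM hx)
      (N.isConnected_biUnion_ne_copy _ j₀)

lemma diff_singleton_eq_iUnion_U (x : Euc d) : N.F \ {x} = ⋃ m, ⋃ _ : 1 ≤ m, N.U x m := by
  refine subset_antisymm (fun y ⟨hyF, hyx⟩ => ?_)
    (iUnion₂_subset fun m _ => N.U_subset_diff x m)
  have hxy : 0 < edist x y := edist_pos.mpr fun h => hyx (mem_singleton_iff.mpr h.symm)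
  obtain ⟨m, hm, hm1⟩ :=
    ((N.eventually_ediam_copy_lt hxy).and (Filter.eventually_ge_atTop 1)).exists
  obtain ⟨σ, hσ, hyσ⟩ := N.exists_copy_mem hyF m
  have hxσ : x ∉ N.copy σ := fun hxσ => (edist_le_ediam_of_mem hxσ hyσ).not_gt (hm σ hσ)
  exact mem_iUnion₂.mpr ⟨m, hm1, mem_U.mpr ⟨σ, hσ, hxσ, hyσ⟩⟩

end Necklace

/-- Let `F` be a stable necklace and `x ∈ F` a point that is not a main node of any copy
of `F`.  Then each `U_m` (the union of the `m`-level copies not containing `x`) is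
connected for `m ≥ 1`, the `U_m` increase with `m`, their union over `m ≥ 1` is
`F \ {x}`, and `F \ {x}` is connected; hence `x` is not a cut point of `F`. -/
theorem Necklace.not_cutPoint_of_not_mem_MF {d : ℕ} (N : Necklace d) (hs : N.Stable)
    (x : Euc d) (hxF : x ∈ N.F) (hxM : x ∉ N.MF) :
    (∀ m : ℕ, 1 ≤ m → IsConnected (N.U x m)) ∧
    (∀ m m' : ℕ, m ≤ m' → N.U x m ⊆ N.U x m') ∧
    (N.F \ {x} = ⋃ m : ℕ, ⋃ _ : 1 ≤ m, N.U x m) ∧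
    IsConnected (N.F \ {x}) := by
  have hU : ∀ m : ℕ, 1 ≤ m → IsConnected (N.U x m) := fun m hm =>
    Nat.sub_add_cancel hm ▸ N.isConnected_U_succ hs hxF hxM (m - 1)
  refine ⟨hU, fun _ _ h => N.U_mono x h, N.diff_singleton_eq_iUnion_U x, ?_⟩
  rw [N.diff_singleton_eq_iUnion_U x]
  exact IsConnected.biUnion_of_chain (t := Ici 1) nonempty_Ici ordConnected_Ici hU
    fun m hm _ => (hU m hm).nonempty.mono (subset_inter subset_rfl (N.U_mono x m.le_succ))
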